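/- arXiv:1311.7523 — 7 statements merged into one kernel-verified Lean document; each statement's English description precedes it below -/
import Mathlib

section
/- Let α and β be finite types and let f : α → β and g : β → α be functions. Then there exists an integer n ≥ 1 such that (g ∘ f)^[n] and (f ∘ g)^[n] are both idempotent, and, writing X = Set.range ((g ∘ f)^[n]) and Y = Set.range ((f ∘ g)^[n]), the map f maps X into Y, the map g ∘ (f ∘ g)^[n-1] maps Y into X, and these two maps restrict to mutually inverse bijections between X and Y. -/
/-- On a finite type, every self-map has an iterate `h^[n]` (with `n ≥ 1`)
absorbing all further multiples: `h^[k*n] = h^[n]` for `k ≥ 1`. -/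
theorem exists_iterate_absorbing {α : Type*} [Finite α] (h : α → α) :
    ∃ n : ℕ, 1 ≤ n ∧ ∀ k : ℕ, 1 ≤ k → h^[k * n] = h^[n] := by
  haveI : Finite (α → α) := Pi.finite
  obtain ⟨a, b, hab, hfab⟩ := Finite.exists_ne_map_eq_of_infinite (fun k : ℕ => h^[k])
  obtain ⟨i, j, hlt, hfij⟩ : ∃ i j : ℕ, i < j ∧ h^[i] = h^[j] := by
    rcases lt_or_gt_of_ne hab with hc | hc
    exacts [⟨a, b, hc, hfab⟩, ⟨b, a, hc, hfab.symm⟩]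
  have hd : 1 ≤ j - i := by omega
  have key : ∀ m, i ≤ m → h^[m + (j - i)] = h^[m] := by
    intro m hm
    calc h^[m + (j - i)] = h^[(m - i) + j] := by rw [show m + (j - i) = (m - i) + j by omega]
      _ = h^[m - i] ∘ h^[j] := Function.iterate_add h _ _
      _ = h^[m - i] ∘ h^[i] := by rw [hfij]
      _ = h^[(m - i) + i] := (Function.iterate_add h _ _).symm
      _ = h^[m] := by rw [show m - i + i = m by omega]
  have key2 : ∀ m, i ≤ m → ∀ t : ℕ, h^[m + t * (j - i)] = h^[m] := by
    intro m hm t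
    induction t with
    | zero => simp
    | succ s ih =>
      have e : m + (s + 1) * (j - i) = (m + s * (j - i)) + (j - i) := by ring
      rw [e, key _ (by omega), ih]
  have hi : i ≤ (i + 1) * (j - i) :=
    calc i ≤ i + 1 := by omega
      _ = (i + 1) * 1 := (mul_one _).symm
      _ ≤ (i + 1) * (j - i) := Nat.mul_le_mul_left _ hd
  refine ⟨(i + 1) * (j - i), Nat.mul_pos (Nat.succ_pos i) hd, fun k hk => ?_⟩
  obtain ⟨s, rfl⟩ : ∃ s, k = s + 1 := ⟨k - 1, by omega⟩
  have e : (s + 1) * ((i + 1) * (j - i)) =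
      (i + 1) * (j - i) + (s * (i + 1)) * (j - i) := by ring
  rw [e]
  exact key2 _ hi _

/-- Given `f : α → β` and `g : β → α` on finite types, there is `n ≥ 1` such that
`(g ∘ f)^[n]` and `(f ∘ g)^[n]` are idempotent, `f` maps `X = range (g ∘ f)^[n]`
into `Y = range (f ∘ g)^[n]`, `g ∘ (f ∘ g)^[n-1]` maps `Y` into `X`, and these
two maps restrict to mutually inverse bijections between `X` and `Y`. -/
theorem exists_idempotent_iterate_mutually_inverse_on_ranges
    {α β : Type*} [Finite α] [Finite β] (f : α → β) (g : β → α) :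
    ∃ n : ℕ, 1 ≤ n ∧
      (g ∘ f)^[n] ∘ (g ∘ f)^[n] = (g ∘ f)^[n] ∧
      (f ∘ g)^[n] ∘ (f ∘ g)^[n] = (f ∘ g)^[n] ∧
      Set.MapsTo f (Set.range ((g ∘ f)^[n])) (Set.range ((f ∘ g)^[n])) ∧
      Set.MapsTo (g ∘ (f ∘ g)^[n - 1]) (Set.range ((f ∘ g)^[n]))
        (Set.range ((g ∘ f)^[n])) ∧
      (∀ x ∈ Set.range ((g ∘ f)^[n]), (g ∘ (f ∘ g)^[n - 1]) (f x) = x) ∧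
      (∀ y ∈ Set.range ((f ∘ g)^[n]), f ((g ∘ (f ∘ g)^[n - 1]) y) = y) := by
  obtain ⟨n₁, hn₁, habs₁⟩ := exists_iterate_absorbing (g ∘ f)
  obtain ⟨n₂, hn₂, habs₂⟩ := exists_iterate_absorbing (f ∘ g)
  set n := n₁ * n₂ with hn
  have hn0 : 1 ≤ n := Nat.mul_pos hn₁ hn₂
  -- absorption for the common exponent
  have h1 : ∀ k : ℕ, 1 ≤ k → (g ∘ f)^[k * n] = (g ∘ f)^[n] := by
    intro k hk
    have e1 : k * n = (k * n₂) * n₁ := by rw [hn]; ring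
    have e2 : n = n₂ * n₁ := by rw [hn]; ring
    rw [e1, habs₁ _ (Nat.mul_pos hk hn₂), e2, habs₁ _ hn₂]
  have h2 : ∀ k : ℕ, 1 ≤ k → (f ∘ g)^[k * n] = (f ∘ g)^[n] := by
    intro k hk
    have e1 : k * n = (k * n₁) * n₂ := by rw [hn]; ring
    rw [e1, habs₂ _ (Nat.mul_pos hk hn₁), hn, habs₂ _ hn₁]
  have idem₁ : (g ∘ f)^[n] ∘ (g ∘ f)^[n] = (g ∘ f)^[n] := by
    rw [← Function.iterate_add, show n + n = 2 * n by ring, h1 2 (by norm_num)]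
  have idem₂ : (f ∘ g)^[n] ∘ (f ∘ g)^[n] = (f ∘ g)^[n] := by
    rw [← Function.iterate_add, show n + n = 2 * n by ring, h2 2 (by norm_num)]
  have hsf : Function.Semiconj f (g ∘ f) (f ∘ g) := fun x => rfl
  have hsg : Function.Semiconj g (f ∘ g) (g ∘ f) := fun x => rfl
  have hn1 : n - 1 + 1 = n := by omega
  refine ⟨n, hn0, idem₁, idem₂, ?_, ?_, ?_, ?_⟩
  · rintro x ⟨a, rfl⟩
    exact ⟨f a, ((hsf.iterate_right n) a).symm⟩
  · rintro y ⟨b, rfl⟩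
    refine ⟨(g ∘ f)^[n - 1] (g b), ?_⟩
    simp only [Function.comp_apply]
    rw [← Function.iterate_add_apply, ← Function.iterate_add_apply,
      (hsg.iterate_right (n - 1 + n)) b]
    congr 1
    omega
  · rintro x ⟨a, rfl⟩
    simp only [Function.comp_apply]
    rw [← (hsf.iterate_right (n - 1)) ((g ∘ f)^[n] a)]
    have : g (f ((g ∘ f)^[n - 1] ((g ∘ f)^[n] a))) =
        (g ∘ f)^[n - 1 + 1] ((g ∘ f)^[n] a) := by
      rw [Function.iterate_succ_apply']; rfl
    rw [this, hn1, ← Function.comp_apply (f := (g ∘ f)^[n]), idem₁]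
  · rintro y ⟨b, rfl⟩
    simp only [Function.comp_apply]
    have : f (g ((f ∘ g)^[n - 1] ((f ∘ g)^[n] b))) =
        (f ∘ g)^[n - 1 + 1] ((f ∘ g)^[n] b) := by
      rw [Function.iterate_succ_apply']; rfl
    rw [this, hn1, ← Function.comp_apply (f := (f ∘ g)^[n]), idem₂]
end

section
/- Let L be a type of labels and let X = (V, E, s, t) and Y = (W, F, s', t') be L-labeled bipointed digraphs with V and W finite. If there exist a morphism from X to Y and a morphism from Y to X, then there exist retractions r of X and r' of Y together with an isomorphism between the retract of X determined by r and the retract of Y determined by r'; that is, a bijection φ : Set.range r → Set.range r' with φ(s) = s', φ(t) = t', and, for all u, v ∈ Set.range r and all a ∈ L, E u v a ↔ F (φ u) (φ v) a. -/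
private lemma exists_idem_iterate {V : Type*} [Finite V] (h : V → V) :
    ∃ n, 0 < n ∧ h^[n] ∘ h^[n] = h^[n] := by
  obtain ⟨i, j, hne, hij⟩ := Finite.exists_ne_map_eq_of_infinite (fun n : ℕ => h^[n])
  wlog hlt : i < j generalizing i j
  · exact this j i hne.symm hij.symm (by omega)
  set d := j - i with hd
  have hdpos : 0 < d := by omega
  have key : ∀ m, i ≤ m → h^[m + d] = h^[m] := by
    intro m hm
    have e1 : m + d = (m - i) + j := by omega
    have e2 : (m - i) + i = m := by omega
    rw [e1, Function.iterate_add, ← hij, ← Function.iterate_add, e2]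
  have key2 : ∀ k m, i ≤ m → h^[m + k * d] = h^[m] := by
    intro k
    induction k with
    | zero => simp
    | succ k ih =>
      intro m hm
      have e : m + (k + 1) * d = (m + d) + k * d := by ring
      rw [e, ih (m + d) (by omega), key m hm]
  refine ⟨(i + 1) * d, by positivity, ?_⟩
  rw [← Function.iterate_add]
  exact key2 (i + 1) ((i + 1) * d) (by nlinarith)

private lemma iterate_idem_mul {V : Type*} (h : V → V) {n : ℕ}
    (hn : h^[n] ∘ h^[n] = h^[n]) : ∀ k, 0 < k → h^[k * n] = h^[n] := by
  intro k hk
  induction k with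
  | zero => omega
  | succ k ih =>
    rcases Nat.eq_zero_or_pos k with rfl | hk'
    · simp
    · have e : (k + 1) * n = k * n + n := by ring
      rw [e, Function.iterate_add, ih hk', hn]

/-- A morphism of `L`-labeled bipointed digraphs `(V, E, s, t) → (W, F, s', t')`:
a map on vertices preserving the start vertex, the end vertex, and labeled edges. -/
def IsLBDMorphism {L V W : Type*} (E : V → V → L → Prop) (s t : V)
    (F : W → W → L → Prop) (s' t' : W) (f : V → W) : Prop :=
  f s = s' ∧ f t = t' ∧ ∀ u v a, E u v a → F (f u) (f v) a

/-- If two finite `L`-labeled bipointed digraphs admit morphisms to each other, then they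
admit isomorphic retracts: there are retractions `r` of `X` and `r'` of `Y` and a bijection
`φ : Set.range r → Set.range r'` preserving the basepoints and the labeled edge relation
in both directions. -/
theorem mutually_homomorphic_implies_isomorphic_retracts
    {L V W : Type*} [Finite V] [Finite W]
    (E : V → V → L → Prop) (s t : V) (F : W → W → L → Prop) (s' t' : W)
    (hXY : ∃ f : V → W, IsLBDMorphism E s t F s' t' f)
    (hYX : ∃ g : W → V, IsLBDMorphism F s' t' E s t g) :
    ∃ (r : V → V) (r' : W → W),
      IsLBDMorphism E s t E s t r ∧ r ∘ r = r ∧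
      IsLBDMorphism F s' t' F s' t' r' ∧ r' ∘ r' = r' ∧
      ∃ (hs : s ∈ Set.range r) (ht : t ∈ Set.range r)
        (hs' : s' ∈ Set.range r') (ht' : t' ∈ Set.range r')
        (φ : Set.range r ≃ Set.range r'),
          φ ⟨s, hs⟩ = ⟨s', hs'⟩ ∧ φ ⟨t, ht⟩ = ⟨t', ht'⟩ ∧
          ∀ (u v : Set.range r) (a : L),
            E (u : V) (v : V) a ↔ F (φ u : W) (φ v : W) a := by
  obtain ⟨f, hfs, hft, hfE⟩ := hXY
  obtain ⟨g, hgs, hgt, hgF⟩ := hYX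
  set p : V → V := g ∘ f with hp
  set q : W → W := f ∘ g with hq
  -- basic fixed points
  have hps : p s = s := by simp [hp, hfs, hgs]
  have hpt : p t = t := by simp [hp, hft, hgt]
  have hqs : q s' = s' := by simp [hq, hgs, hfs]
  have hqt : q t' = t' := by simp [hq, hgt, hft]
  -- iterate fixed points and edge preservation
  have hpE : ∀ n u v a, E u v a → E (p^[n] u) (p^[n] v) a := by
    intro n
    induction n with
    | zero => simp
    | succ n ih =>
      intro u v a hu
      rw [Function.iterate_succ_apply', Function.iterate_succ_apply']
      exact hgF _ _ _ (hfE _ _ _ (ih u v a hu))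
  have hqF : ∀ n u v a, F u v a → F (q^[n] u) (q^[n] v) a := by
    intro n
    induction n with
    | zero => simp
    | succ n ih =>
      intro u v a hu
      rw [Function.iterate_succ_apply', Function.iterate_succ_apply']
      exact hfE _ _ _ (hgF _ _ _ (ih u v a hu))
  obtain ⟨n1, hn1, hi1⟩ := exists_idem_iterate p
  obtain ⟨n2, hn2, hi2⟩ := exists_idem_iterate q
  set N := n1 * n2 with hN
  have hNpos : 0 < N := Nat.mul_pos hn1 hn2
  have hrN : p^[N] ∘ p^[N] = p^[N] := by
    have h1 : p^[N] = p^[n1] := by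
      rw [hN, Nat.mul_comm]; exact iterate_idem_mul p hi1 n2 hn2
    rw [h1, hi1]
  have hrN' : q^[N] ∘ q^[N] = q^[N] := by
    have h1 : q^[N] = q^[n2] := iterate_idem_mul q hi2 n1 hn1
    rw [h1, hi2]
  set r : V → V := p^[N] with hr
  set r' : W → W := q^[N] with hr'
  -- semiconjugacies
  have hsc : Function.Semiconj f p q := fun x => rfl
  have hscN : ∀ x, f (r x) = r' (f x) := (hsc.iterate_right N).eq
  have hsc' : Function.Semiconj g q p := fun x => rfl
  have hscN' : ∀ y, g (r' y) = r (g y) := (hsc'.iterate_right N).eq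
  have hrs : r s = s := Function.iterate_fixed hps N
  have hrt : r t = t := Function.iterate_fixed hpt N
  have hrs' : r' s' = s' := Function.iterate_fixed hqs N
  have hrt' : r' t' = t' := Function.iterate_fixed hqt N
  have hrfix : ∀ x ∈ Set.range r, r x = x := by
    rintro x ⟨y, rfl⟩
    exact congrFun hrN y
  have hrfix' : ∀ y ∈ Set.range r', r' y = y := by
    rintro y ⟨z, rfl⟩
    exact congrFun hrN' z
  have hsucc : ∀ x, p^[N - 1] (p x) = r x := by
    intro x
    rw [hr, ← Function.iterate_succ_apply]
    congr 1; omega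
  have hsucc' : ∀ y, q^[N - 1] (q y) = r' y := by
    intro y
    rw [hr', ← Function.iterate_succ_apply]
    congr 1; omega
  -- forward and backward maps
  have fmem : ∀ x ∈ Set.range r, f x ∈ Set.range r' := by
    intro x hx
    refine ⟨f x, ?_⟩
    rw [← hscN x, hrfix x hx]
  have bmem : ∀ y ∈ Set.range r', p^[N - 1] (g y) ∈ Set.range r := by
    intro y hy
    refine ⟨p^[N - 1] (g y), ?_⟩
    have h1 : p^[N - 1] (g y) = p^[(N - 1) + N] (g y) := by
      conv_lhs => rw [← hrfix' y hy, hscN' y]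
      rw [hr, ← Function.iterate_add_apply]
    have h2 : r (p^[N - 1] (g y)) = p^[N + (N - 1)] (g y) := by
      rw [hr, ← Function.iterate_add_apply]
    rw [h2, Nat.add_comm, ← h1]
  have linv : ∀ x ∈ Set.range r, p^[N - 1] (g (f x)) = x := by
    intro x hx
    have : g (f x) = p x := rfl
    rw [this, hsucc, hrfix x hx]
  have rinv : ∀ y ∈ Set.range r', f (p^[N - 1] (g y)) = y := by
    intro y hy
    have := (hsc.iterate_right (N - 1)).eq (g y)
    rw [this]
    have : f (g y) = q y := rfl
    rw [this, hsucc', hrfix' y hy]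
  refine ⟨r, r', ⟨hrs, hrt, hpE N⟩, hrN, ⟨hrs', hrt', hqF N⟩, hrN',
    ⟨s, hrs⟩, ⟨t, hrt⟩, ⟨s', hrs'⟩, ⟨t', hrt'⟩,
    { toFun := fun x => ⟨f x, fmem x x.2⟩
      invFun := fun y => ⟨p^[N - 1] (g y), bmem y y.2⟩
      left_inv := fun x => Subtype.ext (linv x x.2)
      right_inv := fun y => Subtype.ext (rinv y y.2) }, ?_, ?_, ?_⟩
  · exact Subtype.ext hfs
  · exact Subtype.ext hft
  · intro u v a
    simp only [Equiv.coe_fn_mk]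
    constructor
    · exact hfE u v a
    · intro h
      have := hpE (N - 1) _ _ _ (hgF _ _ _ h)
      rwa [linv u u.2, linv v v.2] at this
end

section
/- Let L be a type of labels and let X = (V, E, s, t) be an L-labeled bipointed digraph with V finite. Let r and r' be two retractions of X such that the retracts determined by r and by r' are each pruned (i.e. the induced structure on Set.range r, and likewise on Set.range r', admits no retraction other than the identity). Then these two retracts are isomorphic: there is a bijection φ : Set.range r → Set.range r' with φ(s) = s and φ(t) = t, where the basepoints s, t lie in both ranges, and E u v a ↔ E (φ u) (φ v) a for all u, v ∈ Set.range r and a ∈ L. -/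
/-- An `L`-labeled bipointed digraph is pruned if its only retraction
(idempotent morphism to itself) is the identity. -/
def IsPrunedLBD {L V : Type*} (E : V → V → L → Prop) (s t : V) : Prop :=
  ∀ r : V → V, IsLBDMorphism E s t E s t r → r ∘ r = r → r = id

/-- In a finite type, every self-map has an idempotent iterate with positive exponent. -/
lemma exists_idempotent_iterate {α : Type*} [Finite α] (f : α → α) :
    ∃ n > 0, f^[n] ∘ f^[n] = f^[n] := by
  obtain ⟨m, k, hne, heq⟩ := Finite.exists_ne_map_eq_of_infinite (fun n : ℕ => f^[n])
  wlog hmk : m < k generalizing m k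
  · exact this k m hne.symm heq.symm (by omega)
  obtain ⟨d, rfl⟩ : ∃ d, k = m + (d + 1) := ⟨k - m - 1, by omega⟩
  have hper : ∀ j, m ≤ j → f^[j] = f^[j + (d + 1)] := by
    intro j hj
    have h1 : f^[j] = f^[j - m] ∘ f^[m] := by
      rw [← Function.iterate_add]
      have : j - m + m = j := by omega
      rw [this]
    rw [h1, heq, ← Function.iterate_add]
    have : j - m + (m + (d + 1)) = j + (d + 1) := by omega
    rw [this]
  have hper' : ∀ c j, m ≤ j → f^[j] = f^[j + c * (d + 1)] := by
    intro c
    induction c with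
    | zero => simp
    | succ c ih =>
      intro j hj
      rw [ih j hj, hper (j + c * (d + 1)) (by omega)]
      have : j + c * (d + 1) + (d + 1) = j + (c + 1) * (d + 1) := by ring
      rw [this]
  refine ⟨(m + 1) * (d + 1), by positivity, ?_⟩
  rw [← Function.iterate_add]
  exact (hper' (m + 1) ((m + 1) * (d + 1)) (by nlinarith)).symm

/-- Morphisms compose. -/
lemma IsLBDMorphism.comp {L U V W : Type*}
    {D : U → U → L → Prop} {s₀ t₀ : U}
    {E : V → V → L → Prop} {s t : V}
    {F : W → W → L → Prop} {s' t' : W} {f : U → V} {g : V → W}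
    (hf : IsLBDMorphism D s₀ t₀ E s t f) (hg : IsLBDMorphism E s t F s' t' g) :
    IsLBDMorphism D s₀ t₀ F s' t' (g ∘ f) :=
  ⟨by simp [hf.1, hg.1], by simp [hf.2.1, hg.2.1],
    fun u v a h => hg.2.2 _ _ _ (hf.2.2 u v a h)⟩

/-- Iterates of an endomorphism are morphisms. -/
lemma IsLBDMorphism.iterate {L V : Type*} {E : V → V → L → Prop} {s t : V}
    {f : V → V} (hf : IsLBDMorphism E s t E s t f) (n : ℕ) :
    IsLBDMorphism E s t E s t f^[n] := by
  induction n with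
  | zero => exact ⟨rfl, rfl, fun _ _ _ h => h⟩
  | succ n ih =>
    rw [Function.iterate_succ']
    exact ih.comp hf

/-- If `r` and `r'` are two retractions of a finite `L`-labeled bipointed digraph
`(V, E, s, t)` whose retracts (the induced structures on `Set.range r` and
`Set.range r'`) are each pruned, then these two retracts are isomorphic: there is a
bijection `φ : Set.range r → Set.range r'` preserving the basepoints and the labeled
edge relation in both directions. -/
theorem pruned_retracts_isomorphic
    {L V : Type*} [Finite V]
    (E : V → V → L → Prop) (s t : V) (r r' : V → V)
    (hr : IsLBDMorphism E s t E s t r) (hrr : r ∘ r = r)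
    (hr' : IsLBDMorphism E s t E s t r') (hrr' : r' ∘ r' = r')
    (hs : s ∈ Set.range r) (ht : t ∈ Set.range r)
    (hs' : s ∈ Set.range r') (ht' : t ∈ Set.range r')
    (hp : IsPrunedLBD (fun (x y : Set.range r) (a : L) => E (x : V) (y : V) a)
      ⟨s, hs⟩ ⟨t, ht⟩)
    (hp' : IsPrunedLBD (fun (x y : Set.range r') (a : L) => E (x : V) (y : V) a)
      ⟨s, hs'⟩ ⟨t, ht'⟩) :
    ∃ φ : Set.range r ≃ Set.range r',
      φ ⟨s, hs⟩ = ⟨s, hs'⟩ ∧ φ ⟨t, ht⟩ = ⟨t, ht'⟩ ∧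
      ∀ (u v : Set.range r) (a : L),
        E (u : V) (v : V) a ↔ E (φ u : V) (φ v : V) a := by
  -- r fixes its range, likewise r'
  have fixr : ∀ x ∈ Set.range r, r x = x := by
    rintro x ⟨w, rfl⟩; exact congrFun hrr w
  have fixr' : ∀ x ∈ Set.range r', r' x = x := by
    rintro x ⟨w, rfl⟩; exact congrFun hrr' w
  set E₁ : Set.range r → Set.range r → L → Prop :=
    fun x y a => E (x : V) (y : V) a with hE₁
  set E₂ : Set.range r' → Set.range r' → L → Prop :=
    fun x y a => E (x : V) (y : V) a with hE₂
  -- the mutual morphisms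
  set f : Set.range r → Set.range r' := fun x => ⟨r' x, ⟨x, rfl⟩⟩ with hf
  set g : Set.range r' → Set.range r := fun x => ⟨r x, ⟨x, rfl⟩⟩ with hg
  have hfm : IsLBDMorphism E₁ ⟨s, hs⟩ ⟨t, ht⟩ E₂ ⟨s, hs'⟩ ⟨t, ht'⟩ f :=
    ⟨Subtype.ext (fixr' s hs'), Subtype.ext (fixr' t ht'),
      fun u v a h => hr'.2.2 _ _ _ h⟩
  have hgm : IsLBDMorphism E₂ ⟨s, hs'⟩ ⟨t, ht'⟩ E₁ ⟨s, hs⟩ ⟨t, ht⟩ g :=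
    ⟨Subtype.ext (fixr s hs), Subtype.ext (fixr t ht),
      fun u v a h => hr.2.2 _ _ _ h⟩
  have hhm : IsLBDMorphism E₁ ⟨s, hs⟩ ⟨t, ht⟩ E₁ ⟨s, hs⟩ ⟨t, ht⟩ (g ∘ f) :=
    hfm.comp hgm
  have hhm' : IsLBDMorphism E₂ ⟨s, hs'⟩ ⟨t, ht'⟩ E₂ ⟨s, hs'⟩ ⟨t, ht'⟩ (f ∘ g) :=
    hgm.comp hfm
  -- idempotent iterates are the identity
  obtain ⟨n, hn, hni⟩ := exists_idempotent_iterate (g ∘ f)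
  obtain ⟨n', hn', hni'⟩ := exists_idempotent_iterate (f ∘ g)
  have hid : (g ∘ f)^[n] = id := hp _ (hhm.iterate n) hni
  have hid' : (f ∘ g)^[n'] = id := hp' _ (hhm'.iterate n') hni'
  -- hence f is a bijection
  have hinj : Function.Injective f := by
    intro x y hxy
    have : (g ∘ f)^[n] x = (g ∘ f)^[n] y := by
      obtain ⟨m, rfl⟩ : ∃ m, n = m + 1 := ⟨n - 1, by omega⟩
      rw [Function.iterate_succ]
      simp [Function.comp, hxy]
    simpa [hid] using this
  have hsurj : Function.Surjective f := by
    intro y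
    refine ⟨g ((f ∘ g)^[n' - 1] y), ?_⟩
    have : (f ∘ g)^[n'] y = y := by rw [hid']; rfl
    have h2 : (f ∘ g)^[n' - 1 + 1] y = y := by
      rwa [show n' - 1 + 1 = n' by omega]
    rw [Function.iterate_succ'] at h2
    exact h2
  refine ⟨Equiv.ofBijective f ⟨hinj, hsurj⟩, hfm.1, hfm.2.1, ?_⟩
  intro u v a
  constructor
  · intro h
    exact hfm.2.2 u v a h
  · intro h
    have h1 : E₁ (g (f u)) (g (f v)) a := hgm.2.2 _ _ a h
    have h2 : E₁ ((g ∘ f)^[n - 1] (g (f u))) ((g ∘ f)^[n - 1] (g (f v))) a :=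
      (hhm.iterate (n - 1)).2.2 _ _ a h1
    have h3 : ∀ x : Set.range r, (g ∘ f)^[n - 1] (g (f x)) = x := by
      intro x
      have : (g ∘ f)^[n - 1 + 1] x = x := by
        rw [show n - 1 + 1 = n by omega, hid]; rfl
      rw [Function.iterate_succ] at this
      exact this
    rwa [h3 u, h3 v] at h2
end

section
/- Let V be a finite type, let T be a simple graph on V which is a tree (connected with no cycles), let W be a type, and for each pair u, v ∈ V let C u v : W → W → Prop be a constraint satisfying the symmetry condition C u v x y ↔ C v u y x for all u, v, x, y. Let B : V → Set W be a family of sets such that: (a) B v is nonempty for every v ∈ V, and (b) for every edge {u, v} of T and every x ∈ B u, there exists y ∈ B v with C u v x y. Then there exists a function f : V → W such that f v ∈ B v for all v ∈ V and C u v (f u) (f v) holds for every edge {u, v} of T. -/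
/-!
Root the tree at any vertex `r`, pick a candidate there, and push values outward along the
unique path from `r` to each vertex, choosing at every step a compatible candidate as arc
consistency allows. Across an edge `uv` of a tree, one of the two root paths extends the
other by that edge, so the value at one endpoint was chosen from the value at the other; the
symmetry of `C` covers the edges traversed backwards.
-/

namespace SimpleGraph

variable {V : Type*} {G : SimpleGraph V}

theorem IsAcyclic.eq_concat_or_eq_concat (hG : G.IsAcyclic) {r u v : V}
    {p : G.Walk r u} {q : G.Walk r v} (hp : p.IsPath) (hq : q.IsPath) (h : G.Adj u v) :
    q = p.concat h ∨ p = q.concat h.symm := by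
  by_cases hu : u ∈ q.support
  · exact .inl (hG.path_concat hp hq h hu)
  · exact .inr (hG.path_concat hq hp h.symm
      (hG.mem_support_of_ne_mem_support_of_adj_of_isPath hp hq h hu))

namespace Walk

variable {α : V → Sort*} (s : ∀ ⦃u v⦄, G.Adj u v → α u → α v)

def propagate : ∀ {u v : V}, G.Walk u v → α u → α v
  | _, _, nil, a => a
  | _, _, cons h p, a => p.propagate (s h a)

theorem propagate_concat {u v w : V} (p : G.Walk u v) (h : G.Adj v w) (a : α u) :
    (p.concat h).propagate s a = s h (p.propagate s a) := by
  induction p with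
  | nil => rfl
  | cons h' p ih => exact ih h _

end Walk

theorem IsTree.exists_forall_adj_eq_or_eq {α : V → Sort*} (hG : G.IsTree)
    (s : ∀ ⦃u v⦄, G.Adj u v → α u → α v) (r : V) (a : α r) :
    ∃ f : ∀ v, α v, ∀ ⦃u v⦄ (h : G.Adj u v), f v = s h (f u) ∨ f u = s h.symm (f v) := by
  choose path hpath using fun v => (hG.existsUnique_path r v).exists
  refine ⟨fun v => (path v).propagate s a, fun u v h => ?_⟩
  rcases hG.isAcyclic.eq_concat_or_eq_concat (hpath u) (hpath v) h with hv | hu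
  · exact .inl (by simp only [hv, Walk.propagate_concat])
  · exact .inr (by simp only [hu, Walk.propagate_concat])

end SimpleGraph

theorem tree_csp_arc_consistency_general
    {V W : Type*} (T : SimpleGraph V) (hT : T.IsTree)
    (C : V → V → W → W → Prop)
    (hC : ∀ u v x y, C u v x y ↔ C v u y x)
    (B : V → Set W)
    (hne : ∀ v, (B v).Nonempty)
    (harc : ∀ u v, T.Adj u v → ∀ x ∈ B u, ∃ y ∈ B v, C u v x y) :
    ∃ f : V → W, (∀ v, f v ∈ B v) ∧ ∀ u v, T.Adj u v → C u v (f u) (f v) := by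
  choose step hstepB hstepC using harc
  obtain ⟨r⟩ := hT.connected.nonempty
  obtain ⟨f, hf⟩ := hT.exists_forall_adj_eq_or_eq (α := fun v => B v)
    (fun u v h x => ⟨step u v h x x.2, hstepB u v h x x.2⟩) r ⟨_, (hne r).some_mem⟩
  refine ⟨fun v => f v, fun v => (f v).2, fun u v h => ?_⟩
  rcases hf h with hv | hu
  · simpa only [hv] using hstepC u v h _ _
  · simpa only [hC u v, hu] using hstepC v u h.symm _ _

/-- Arc consistency for tree-structured constraint satisfaction problems: if `T` is a
tree on the finite vertex type `V`, `C` is a symmetric family of binary constraints,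
and `B` assigns to each vertex a nonempty candidate set such that along every edge every
candidate value extends to a compatible candidate value at the other end, then there is
a global solution `f` choosing a candidate at each vertex and satisfying all edge
constraints. -/
theorem tree_csp_arc_consistency
    {V W : Type*} [Fintype V] (T : SimpleGraph V) (hT : T.IsTree)
    (C : V → V → W → W → Prop)
    (hC : ∀ u v x y, C u v x y ↔ C v u y x)
    (B : V → Set W)
    (hne : ∀ v, (B v).Nonempty)
    (harc : ∀ u v, T.Adj u v → ∀ x ∈ B u, ∃ y ∈ B v, C u v x y) :
    ∃ f : V → W, (∀ v, f v ∈ B v) ∧ ∀ u v, T.Adj u v → C u v (f u) (f v) :=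
  tree_csp_arc_consistency_general T hT C hC B hne harc
end

section
/- Let L be a type of labels, let X = (V, E, s, t) be a finite L-labeled bipointed digraph whose underlying undirected graph is a tree, and assume X has no parallel edges, i.e. for all u, v ∈ V there is at most one pair (a, d) with a ∈ L and d a direction such that X has an edge between u and v labelled a in direction d. Let Y = (W, F, s', t') be any finite L-labeled bipointed digraph. Then there exists a morphism from X to Y if and only if there exists a family B : V → Set W such that: (a) B v is nonempty for every v ∈ V; (b) B s ⊆ {s'} and B t ⊆ {t'}; and (c) for every u, v ∈ V and a ∈ L with E u v a, every x ∈ B u admits y ∈ B v with F x y a, and every y ∈ B v admits x ∈ B u with F x y a. -/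
/-- `X` has an edge between `u` and `v` labelled `a` in direction `d`: for `d = true`
the edge points from `u` to `v`, for `d = false` it points from `v` to `u`. -/
def HasEdgeDir {L V : Type*} (E : V → V → L → Prop) (u v : V) (a : L) (d : Bool) : Prop :=
  if d then E u v a else E v u a

/-- The underlying undirected simple graph of an `L`-labeled digraph: `u` is adjacent to
`v` iff `u ≠ v` and some labeled edge joins them (in either direction). -/
def underlyingGraph {L V : Type*} (E : V → V → L → Prop) : SimpleGraph V where
  Adj u v := u ≠ v ∧ ∃ a, E u v a ∨ E v u a
  symm := by
    constructor
    rintro u v ⟨hne, a, ha⟩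
    exact ⟨hne.symm, a, ha.symm⟩
  loopless := by
    constructor
    rintro v ⟨hne, -⟩
    exact hne rfl

/-!
On a tree, arc consistency already implies global consistency. Root the tree at `s`, put `s'`
there, and walk outwards: each vertex picks a candidate compatible with the choice at its parent,
which exists by arc consistency. Every edge of a tree joins a vertex to its parent, so its
constraint was met when the child chose; without parallel edges there is only one constraint per
edge to meet.
-/

namespace SimpleGraph

variable {V W : Type*} {G : SimpleGraph V}

theorem IsAcyclic.eq_cons_or_eq_cons_of_adj (hG : G.IsAcyclic) {r u v : V} {p : G.Walk u r}
    {q : G.Walk v r} (hp : p.IsPath) (hq : q.IsPath) (h : G.Adj u v) :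
    p = .cons h q ∨ q = .cons h.symm p := by
  by_cases hv : v ∈ p.support
  · have hu : u ∉ q.support := by
      simpa using hG.ne_mem_support_of_support_of_adj_of_isPath hp.reverse hq.reverse h
        (by simpa using hv)
    exact .inl <| congrArg Subtype.val <|
      (hG.subsingleton_path u r).elim ⟨p, hp⟩ ⟨_, hq.cons hu⟩
  · exact .inr <| congrArg Subtype.val <|
      (hG.subsingleton_path v r).elim ⟨q, hq⟩ ⟨_, hp.cons hv⟩

section Propagate

variable {B : V → Set W} {R : V → V → W → W → Prop}
  (hB : ∀ ⦃u v⦄, G.Adj u v → ∀ x ∈ B u, ∃ y ∈ B v, R u v x y ∧ R v u y x)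

noncomputable def Walk.propagate_s7 {r : V} (x₀ : B r) : ∀ {v : V}, G.Walk v r → B v
  | _, .nil => x₀
  | _, .cons h p => ⟨_, (hB h.symm _ (propagate_s7 x₀ p).2).choose_spec.1⟩

theorem Walk.propagate_cons {r u v : V} (x₀ : B r) (h : G.Adj u v) (p : G.Walk v r) :
    R v u (p.propagate_s7 hB x₀) ((Walk.cons h p).propagate_s7 hB x₀) ∧
      R u v ((Walk.cons h p).propagate_s7 hB x₀) (p.propagate_s7 hB x₀) :=
  (hB h.symm _ (p.propagate_s7 hB x₀).2).choose_spec.2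

include hB in
theorem IsTree.exists_forall_adj_of_forall_adj_exists (hG : G.IsTree) {r : V} {x₀ : W}
    (hx₀ : x₀ ∈ B r) :
    ∃ f : V → W, f r = x₀ ∧ (∀ v, f v ∈ B v) ∧
      ∀ ⦃u v⦄, G.Adj u v → R u v (f u) (f v) := by
  choose P hP hP_unique using fun v => hG.existsUnique_path v r
  refine ⟨fun v => (P v).propagate_s7 hB ⟨x₀, hx₀⟩, ?_, fun v => Subtype.property _, ?_⟩
  · simp only [← hP_unique r .nil .nil, Walk.propagate_s7]
  · intro u v h
    rcases hG.isAcyclic.eq_cons_or_eq_cons_of_adj (hP u) (hP v) h with hu | hv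
    · simp only [hu]
      exact (Walk.propagate_cons hB _ h _).2
    · simp only [hv]
      exact (Walk.propagate_cons hB _ h.symm _).1

end Propagate

end SimpleGraph

section LabeledDigraph

variable {L V W : Type*} {E : V → V → L → Prop} {F : W → W → L → Prop}

def NoParallelEdges (E : V → V → L → Prop) : Prop :=
  ∀ (u v : V) (a₁ a₂ : L) (d₁ d₂ : Bool),
    HasEdgeDir E u v a₁ d₁ → HasEdgeDir E u v a₂ d₂ → a₁ = a₂ ∧ d₁ = d₂

namespace NoParallelEdges

variable (hpar : NoParallelEdges E) {u v : V} {a b : L}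
include hpar

theorem label_eq (ha : E u v a) (hb : E u v b) : a = b :=
  (hpar u v a b true true ha hb).1

theorem not_edge_swap (ha : E u v a) : ¬ E v u b :=
  fun hb => Bool.noConfusion (hpar u v a b true false ha hb).2

theorem ne_of_edge (ha : E u v a) : u ≠ v := by
  rintro rfl
  exact hpar.not_edge_swap ha ha

theorem adj_of_edge (ha : E u v a) : (underlyingGraph E).Adj u v :=
  ⟨hpar.ne_of_edge ha, a, .inl ha⟩

end NoParallelEdges

def ArcConsistent (E : V → V → L → Prop) (F : W → W → L → Prop) (B : V → Set W) :
    Prop :=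
  ∀ (u v : V) (a : L), E u v a →
    (∀ x ∈ B u, ∃ y ∈ B v, F x y a) ∧ (∀ y ∈ B v, ∃ x ∈ B u, F x y a)

theorem arcConsistent_singleton {f : V → W} (hf : ∀ u v a, E u v a → F (f u) (f v) a) :
    ArcConsistent E F fun v => {f v} := by
  intro u v a h
  exact ⟨fun x hx => ⟨f v, rfl, hx ▸ hf u v a h⟩,
    fun y hy => ⟨f u, rfl, hy ▸ hf u v a h⟩⟩

theorem ArcConsistent.exists_of_adj {B : V → Set W} (hpar : NoParallelEdges E)
    (hB : ArcConsistent E F B) {u v : V} (h : (underlyingGraph E).Adj u v) {x : W}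
    (hx : x ∈ B u) :
    ∃ y ∈ B v, (∀ a, E u v a → F x y a) ∧ (∀ a, E v u a → F y x a) := by
  obtain ⟨-, a₀, h₀ | h₀⟩ := h
  · obtain ⟨y, hy, hxy⟩ := (hB u v a₀ h₀).1 x hx
    exact ⟨y, hy, fun a ha => hpar.label_eq h₀ ha ▸ hxy,
      fun a ha => absurd ha (hpar.not_edge_swap h₀)⟩
  · obtain ⟨y, hy, hyx⟩ := (hB v u a₀ h₀).2 x hx
    exact ⟨y, hy, fun a ha => absurd ha (hpar.not_edge_swap h₀),
      fun a ha => hpar.label_eq h₀ ha ▸ hyx⟩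

end LabeledDigraph

theorem morphism_iff_arc_consistent_family_general
    {L V W : Type*}
    (E : V → V → L → Prop) (s t : V) (F : W → W → L → Prop) (s' t' : W)
    (htree : (underlyingGraph E).IsTree)
    (hpar : ∀ (u v : V) (a₁ a₂ : L) (d₁ d₂ : Bool),
      HasEdgeDir E u v a₁ d₁ → HasEdgeDir E u v a₂ d₂ → a₁ = a₂ ∧ d₁ = d₂) :
    (∃ f : V → W, IsLBDMorphism E s t F s' t' f) ↔
      ∃ B : V → Set W,
        (∀ v, (B v).Nonempty) ∧
        B s ⊆ {s'} ∧ B t ⊆ {t'} ∧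
        ∀ (u v : V) (a : L), E u v a →
          (∀ x ∈ B u, ∃ y ∈ B v, F x y a) ∧
          (∀ y ∈ B v, ∃ x ∈ B u, F x y a) := by
  constructor
  · rintro ⟨f, hfs, hft, hf⟩
    exact ⟨fun v => {f v}, fun v => Set.singleton_nonempty _, by simp [hfs], by simp [hft],
      arcConsistent_singleton hf⟩
  · rintro ⟨B, hne, hBs, hBt, hB⟩
    have hs' : s' ∈ B s := by
      obtain ⟨x, hx⟩ := hne s
      rwa [← hBs hx]
    obtain ⟨f, hfs, hfB, hf⟩ := htree.exists_forall_adj_of_forall_adj_exists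
      (R := fun u v x y => ∀ a, E u v a → F x y a)
      (fun u v h x hx => ArcConsistent.exists_of_adj hpar hB h hx) hs'
    exact ⟨f, hfs, hBt (hfB t), fun u v a h => hf (NoParallelEdges.adj_of_edge hpar h) a h⟩

/-- Correctness of the constraint-propagation algorithm: if the underlying undirected
graph of the finite `L`-labeled bipointed digraph `X = (V, E, s, t)` is a tree and `X`
has no parallel edges, then for any finite `L`-labeled bipointed digraph
`Y = (W, F, s', t')` there is a morphism `X → Y` iff there is a family `B` of nonempty
candidate sets, with `B s ⊆ {s'}` and `B t ⊆ {t'}`, which is consistent along every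
labeled edge in both directions. -/
theorem morphism_iff_arc_consistent_family
    {L V W : Type*} [Finite V] [Finite W]
    (E : V → V → L → Prop) (s t : V) (F : W → W → L → Prop) (s' t' : W)
    (htree : (underlyingGraph E).IsTree)
    (hpar : ∀ (u v : V) (a₁ a₂ : L) (d₁ d₂ : Bool),
      HasEdgeDir E u v a₁ d₁ → HasEdgeDir E u v a₂ d₂ → a₁ = a₂ ∧ d₁ = d₂) :
    (∃ f : V → W, IsLBDMorphism E s t F s' t' f) ↔
      ∃ B : V → Set W,
        (∀ v, (B v).Nonempty) ∧
        B s ⊆ {s'} ∧ B t ⊆ {t'} ∧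
        ∀ (u v : V) (a : L), E u v a →
          (∀ x ∈ B u, ∃ y ∈ B v, F x y a) ∧
          (∀ y ∈ B v, ∃ x ∈ B u, F x y a) :=
  morphism_iff_arc_consistent_family_general E s t F s' t' htree hpar
end

section
/- Let G and H be finite simple graphs such that there exist graph homomorphisms G → H and H → G. Then there exist graph homomorphisms f : G → G and g : H → H with f ∘ f = f and g ∘ g = g, such that the subgraph of G induced on Set.range f is isomorphic (as a simple graph) to the subgraph of H induced on Set.range g. -/
/-- Iterate of a graph homomorphism. -/
def SimpleGraphHomIter {V : Type*} {G : SimpleGraph V} (e : G →g G) : ℕ → (G →g G)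
  | 0 => SimpleGraph.Hom.id
  | n + 1 => e.comp (SimpleGraphHomIter e n)

lemma coe_SimpleGraphHomIter {V : Type*} {G : SimpleGraph V} (e : G →g G) (n : ℕ) :
    ⇑(SimpleGraphHomIter e n) = (⇑e)^[n] := by
  induction n with
  | zero => rfl
  | succ n ih =>
    rw [Function.iterate_succ']
    funext x
    simp [SimpleGraphHomIter, ih]

lemma aux_idem_iterate {α : Type*} (e : α → α) (m d : ℕ) (hd : 0 < d)
    (h : e^[m + d] = e^[m]) : ∃ N, 0 < N ∧ e^[N + N] = e^[N] := by
  have key : ∀ k, e^[m + d * k] = e^[m] := by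
    intro k
    induction k with
    | zero => simp
    | succ k ih =>
      have : m + d * (k + 1) = (m + d * k) + d := by ring
      rw [this, Function.iterate_add, ih, ← Function.iterate_add, h]
  have key2 : ∀ s k, e^[m + s + d * k] = e^[m + s] := by
    intro s k
    have : m + s + d * k = s + (m + d * k) := by ring
    rw [this, Function.iterate_add, key k, ← Function.iterate_add, Nat.add_comm s m]
  refine ⟨d * (m + 1), Nat.mul_pos hd (Nat.succ_pos m), ?_⟩
  have hge : m ≤ d * (m + 1) := by nlinarith
  have heq : d * (m + 1) + d * (m + 1) = m + (d * (m + 1) - m) + d * (m + 1) := by omega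
  have heq2 : d * (m + 1) = m + (d * (m + 1) - m) := by omega
  rw [heq, key2, ← heq2]

lemma exists_idem_iterate_s9 {α : Type*} [Finite α] (e : α → α) :
    ∃ N, 0 < N ∧ e^[N + N] = e^[N] := by
  obtain ⟨m, n, hne, h⟩ := Finite.exists_ne_map_eq_of_infinite (fun k : ℕ => e^[k])
  rcases hne.lt_or_gt with hlt | hlt
  · refine aux_idem_iterate e m (n - m) (by omega) ?_
    have : m + (n - m) = n := by omega
    rw [this]; exact h.symm
  · refine aux_idem_iterate e n (m - n) (by omega) ?_
    have : n + (m - n) = m := by omega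
    rw [this]; exact h

lemma iterate_mul_of_idem {α : Type*} (e : α → α) (N : ℕ)
    (h : e^[N + N] = e^[N]) : ∀ k, 0 < k → e^[N * k] = e^[N] := by
  intro k hk
  induction k with
  | zero => omega
  | succ k ih =>
    rcases Nat.eq_zero_or_pos k with hk0 | hk0
    · subst hk0; simp
    · have : N * (k + 1) = N * k + N := by ring
      rw [this, Function.iterate_add, ih hk0, ← Function.iterate_add, h]

/-- Two finite simple graphs admitting graph homomorphisms in both directions have
isomorphic retracts: there are idempotent homomorphisms `f : G → G` and `g : H → H`
such that the subgraphs induced on their ranges are isomorphic. -/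
theorem mutually_homomorphic_graphs_have_isomorphic_retracts
    {V W : Type*} [Finite V] [Finite W] (G : SimpleGraph V) (H : SimpleGraph W)
    (hGH : Nonempty (G →g H)) (hHG : Nonempty (H →g G)) :
    ∃ (f : G →g G) (g : H →g H),
      (f : V → V) ∘ (f : V → V) = (f : V → V) ∧
      (g : W → W) ∘ (g : W → W) = (g : W → W) ∧
      Nonempty ((G.induce (Set.range f)) ≃g (H.induce (Set.range g))) := by
  obtain ⟨φ⟩ := hGH
  obtain ⟨ψ⟩ := hHG
  set E : G →g G := ψ.comp φ with hEdef
  set D : H →g H := φ.comp ψ with hDdef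
  obtain ⟨N₁, hN₁, hE₁⟩ := exists_idem_iterate_s9 (⇑E)
  obtain ⟨N₂, hN₂, hD₂⟩ := exists_idem_iterate_s9 (⇑D)
  set N := N₁ * N₂ with hNdef
  have hNpos : 0 < N := Nat.mul_pos hN₁ hN₂
  have hE : (⇑E)^[N + N] = (⇑E)^[N] := by
    have h1 := iterate_mul_of_idem (⇑E) N₁ hE₁ (2 * N₂) (by omega)
    have h2 := iterate_mul_of_idem (⇑E) N₁ hE₁ N₂ hN₂
    have : N + N = N₁ * (2 * N₂) := by rw [hNdef]; ring
    rw [this, h1, ← h2]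
  have hD : (⇑D)^[N + N] = (⇑D)^[N] := by
    have h1 := iterate_mul_of_idem (⇑D) N₂ hD₂ (2 * N₁) (by omega)
    have h2 := iterate_mul_of_idem (⇑D) N₂ hD₂ N₁ hN₁
    have : N + N = N₂ * (2 * N₁) := by rw [hNdef]; ring
    rw [this, h1, ← h2, Nat.mul_comm]
  clear hNdef
  clear_value N
  obtain ⟨M, rfl⟩ : ∃ M, N = M + 1 := ⟨N - 1, by omega⟩
  set f : G →g G := SimpleGraphHomIter E (M + 1) with hfdef
  set g : H →g H := SimpleGraphHomIter D (M + 1) with hgdef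
  have hfc : ⇑f = (⇑E)^[M + 1] := coe_SimpleGraphHomIter E (M + 1)
  have hgc : ⇑g = (⇑D)^[M + 1] := coe_SimpleGraphHomIter D (M + 1)
  -- commutation : φ ∘ E^[k] = D^[k] ∘ φ
  have hcomm : ∀ k x, φ ((⇑E)^[k] x) = (⇑D)^[k] (φ x) := by
    intro k
    induction k with
    | zero => intro x; simp
    | succ k ih =>
      intro x
      rw [Function.iterate_succ_apply', Function.iterate_succ_apply']
      have : φ (E ((⇑E)^[k] x)) = D (φ ((⇑E)^[k] x)) := rfl
      rw [this, ih]
  have hcomm' : ∀ k y, ψ ((⇑D)^[k] y) = (⇑E)^[k] (ψ y) := by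
    intro k
    induction k with
    | zero => intro y; simp
    | succ k ih =>
      intro y
      rw [Function.iterate_succ_apply, Function.iterate_succ_apply]
      have : ψ (D y) = E (ψ y) := rfl
      rw [ih (D y), this]
  -- adjacency preserved by iterates
  have hadjE : ∀ k {a b}, G.Adj a b → G.Adj ((⇑E)^[k] a) ((⇑E)^[k] b) := by
    intro k
    induction k with
    | zero => intro a b h; simpa using h
    | succ k ih =>
      intro a b h
      rw [Function.iterate_succ_apply', Function.iterate_succ_apply']
      exact E.map_adj (ih h)
  refine ⟨f, g, ?_, ?_, ⟨?_⟩⟩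
  · rw [hfc, ← Function.iterate_add, hE]
  · rw [hgc, ← Function.iterate_add, hD]
  -- the isomorphism
  -- forward map: x ↦ φ x ; backward map: y ↦ E^[M+1] (E^[M] (ψ y))
  · have hBmem : ∀ y : W, (⇑E)^[M + 1] ((⇑E)^[M] (ψ y)) ∈ Set.range ⇑f := by
      intro y; exact ⟨(⇑E)^[M] (ψ y), by rw [hfc]⟩
    have hAmem : ∀ x : V, x ∈ Set.range ⇑f → φ x ∈ Set.range ⇑g := by
      rintro x ⟨z, rfl⟩
      refine ⟨φ z, ?_⟩
      rw [hgc, hfc, hcomm]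
    have hfix : ∀ x ∈ Set.range ⇑f, (⇑E)^[M + 1] x = x := by
      rintro x ⟨z, rfl⟩
      rw [hfc, ← Function.iterate_add_apply, hE]
    have hgfix : ∀ y ∈ Set.range ⇑g, (⇑D)^[M + 1] y = y := by
      rintro y ⟨z, rfl⟩
      rw [hgc, ← Function.iterate_add_apply, hD]
    have hBA : ∀ x ∈ Set.range ⇑f, (⇑E)^[M + 1] ((⇑E)^[M] (ψ (φ x))) = x := by
      intro x hx
      have h1 : ψ (φ x) = E x := rfl
      rw [h1, ← Function.iterate_succ_apply, ← Function.iterate_add_apply]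
      show (⇑E)^[(M + 1) + (M + 1)] x = x
      rw [hE]; exact hfix _ hx
    have hAB : ∀ y ∈ Set.range ⇑g, φ ((⇑E)^[M + 1] ((⇑E)^[M] (ψ y))) = y := by
      intro y hy
      rw [hcomm, hcomm]
      have h1 : φ (ψ y) = D y := rfl
      rw [h1, ← Function.iterate_succ_apply, ← Function.iterate_add_apply]
      show (⇑D)^[(M + 1) + (M + 1)] y = y
      rw [hD]; exact hgfix _ hy
    refine ⟨⟨fun x => ⟨φ x.1, hAmem x.1 x.2⟩,
        fun y => ⟨(⇑E)^[M + 1] ((⇑E)^[M] (ψ y.1)), hBmem y.1⟩, ?_, ?_⟩, ?_⟩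
    · rintro ⟨x, hx⟩
      exact Subtype.ext (hBA x hx)
    · rintro ⟨y, hy⟩
      exact Subtype.ext (hAB y hy)
    · rintro ⟨a, ha⟩ ⟨b, hb⟩
      simp only [Equiv.coe_fn_mk, SimpleGraph.comap_adj]
      constructor
      · intro h
        have h1 : G.Adj (ψ (φ a)) (ψ (φ b)) := ψ.map_adj h
        have h2 := hadjE (M + 1) (hadjE M h1)
        rwa [hBA a ha, hBA b hb] at h2
      · exact fun h => φ.map_adj h
end

section
/- Let V be a finite type and G a simple graph on V which is a tree (connected with no cycles), let H be a simple graph on a type W, and let B : V → Set W be a family of sets such that B v is nonempty for every v, and for every edge {u, v} of G and every x ∈ B u there exists y ∈ B v with x adjacent to y in H. Then there exists a graph homomorphism f : G → H with f v ∈ B v for all v ∈ V. -/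
open SimpleGraph

noncomputable def extWalk {V W : Type*} (G : SimpleGraph V) (H : SimpleGraph W) (B : V → Set W)
    (harc : ∀ u v, G.Adj u v → ∀ x ∈ B u, ∃ y ∈ B v, H.Adj x y)
    (r : V) (x₀ : W) (hx₀ : x₀ ∈ B r) : ∀ {v : V}, G.Walk v r → {x // x ∈ B v}
  | _, .nil => ⟨x₀, hx₀⟩
  | _, .cons h q =>
    ⟨(harc _ _ h.symm (extWalk G H B harc r x₀ hx₀ q).1
        (extWalk G H B harc r x₀ hx₀ q).2).choose,
     (harc _ _ h.symm (extWalk G H B harc r x₀ hx₀ q).1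
        (extWalk G H B harc r x₀ hx₀ q).2).choose_spec.1⟩

lemma extWalk_adj {V W : Type*} (G : SimpleGraph V) (H : SimpleGraph W) (B : V → Set W)
    (harc : ∀ u v, G.Adj u v → ∀ x ∈ B u, ∃ y ∈ B v, H.Adj x y)
    (r : V) (x₀ : W) (hx₀ : x₀ ∈ B r) {u v : V} (h : G.Adj u v) (q : G.Walk v r) :
    H.Adj (extWalk G H B harc r x₀ hx₀ q).1
      (extWalk G H B harc r x₀ hx₀ (.cons h q)).1 := by
  have he : extWalk G H B harc r x₀ hx₀ (.cons h q) =
      ⟨(harc _ _ h.symm (extWalk G H B harc r x₀ hx₀ q).1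
          (extWalk G H B harc r x₀ hx₀ q).2).choose,
       (harc _ _ h.symm (extWalk G H B harc r x₀ hx₀ q).1
          (extWalk G H B harc r x₀ hx₀ q).2).choose_spec.1⟩ := by
    rw [extWalk]
  rw [he]
  exact (harc _ _ h.symm (extWalk G H B harc r x₀ hx₀ q).1
      (extWalk G H B harc r x₀ hx₀ q).2).choose_spec.2

/-- Arc consistency for graph homomorphisms from a tree: if `G` is a tree on the finite
vertex type `V`, `H` is any simple graph, and `B` assigns to each vertex a nonempty
candidate set such that along every edge of `G` every candidate at one end has an
`H`-adjacent candidate at the other end, then there is a graph homomorphism `G → H`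
choosing a candidate at every vertex. -/
theorem tree_graph_hom_arc_consistency
    {V W : Type*} [Fintype V] (G : SimpleGraph V) (hG : G.IsTree)
    (H : SimpleGraph W) (B : V → Set W)
    (hne : ∀ v, (B v).Nonempty)
    (harc : ∀ u v, G.Adj u v → ∀ x ∈ B u, ∃ y ∈ B v, H.Adj x y) :
    ∃ f : G →g H, ∀ v, f v ∈ B v := by
  classical
  have hconn := hG.isConnected
  obtain ⟨r⟩ := hconn.nonempty
  obtain ⟨x₀, hx₀⟩ := hne r
  choose p hp hp' using (hG.existsUnique_path · r)
  set F := fun v => extWalk G H B harc r x₀ hx₀ (p v) with hF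
  have key : ∀ u v, G.Adj u v → H.Adj (F u).1 (F v).1 := by
    intro u v h
    by_cases hv : v ∈ (p u).support
    · -- p u passes through v: p u = cons h (p v)
      have htake : (p u).takeUntil v hv = .cons h .nil :=
        (hG.existsUnique_path u v).unique ((hp u).takeUntil hv)
          ((Walk.IsPath.nil.cons (by simpa using h.ne)))
      have hdrop : (p u).dropUntil v hv = p v := hp' v _ ((hp u).dropUntil hv)
      have hpu : p u = Walk.cons h (p v) := by
        conv_lhs => rw [← Walk.take_spec (p u) hv]
        rw [htake, hdrop]
        rfl
      have h2 := extWalk_adj G H B harc r x₀ hx₀ h (p v)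
      rw [← hpu] at h2
      simpa [hF] using h2.symm
    · -- cons h.symm (p u) is a path from v, so equals p v
      have hpath : (Walk.cons h.symm (p u)).IsPath :=
        (Walk.cons_isPath_iff _ _).2 ⟨hp u, hv⟩
      have hpv : p v = Walk.cons h.symm (p u) := (hp' v _ hpath).symm
      have h2 := extWalk_adj G H B harc r x₀ hx₀ h.symm (p u)
      rw [← hpv] at h2
      simpa [hF] using h2
  exact ⟨⟨fun v => (F v).1, fun h => key _ _ h⟩, fun v => (F v).2⟩
end
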